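/- Let G = (V,E) be a finite graph with n = |V| and m = |E|, M = m+1, and L(β) = M·Σ_j(|β_j|_2 + |β_j−1|_2) + Σ_{(u,v)∈E}|β_u+β_v−1|_2 for β : V → ℚ. Denote by L* the minimum of L over ℚ^V. Then maxcut(G) = M·n + m − L*. -/

import Mathlib

/-!
On a binary point `s ∈ {0,1}^V` every vertex term equals 1 and the term of an edge is 0 or 1
according as the edge is cut or not, so `L(s) = M n + m - cut(s)`. Conversely, if every
`|β_j|₂ ≤ 1`, rounding each `β_j` to its residue modulo 2 keeps the vertex terms at least 1
(always `max(|x|₂, |x - 1|₂) ≥ 1`) and, by the ultrametric inequality, does not increase any edge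
term. If some `|β_j|₂ > 1`, then also `|β_j - 1|₂ > 1`, and the vertex terms alone give
`L(β) ≥ M (n + 1) > M n + m`.
-/

namespace padicNorm

variable {p : ℕ} [Fact p.Prime]

theorem add_eq_of_lt {a d : ℚ} (h : padicNorm p d < padicNorm p a) :
    padicNorm p (a + d) = padicNorm p a := by
  rw [add_eq_max_of_ne h.ne', max_eq_left h.le]

theorem sub_one_eq_one_of_lt_one {x : ℚ} (hx : padicNorm p x < 1) :
    padicNorm p (x - 1) = 1 := by
  rw [sub_eq_neg_add, add_eq_of_lt] <;> simp [hx]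

theorem sub_one_eq_of_one_lt {x : ℚ} (hx : 1 < padicNorm p x) :
    padicNorm p (x - 1) = padicNorm p x := by
  rw [sub_eq_add_neg, add_eq_of_lt]; simp [hx]

theorem one_le_add_sub_one (x : ℚ) : 1 ≤ padicNorm p x + padicNorm p (x - 1) := by
  rcases lt_or_ge (padicNorm p x) 1 with hx | hx
  · rw [sub_one_eq_one_of_lt_one hx]; linarith [padicNorm.nonneg (p := p) x]
  · linarith [padicNorm.nonneg (p := p) (x - 1)]

theorem exists_sub_natCast_lt_one {x : ℚ} (hx : padicNorm p x ≤ 1) :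
    ∃ n : ℕ, n < p ∧ padicNorm p (x - n) < 1 := by
  have hx' : ‖(x : ℚ_[p])‖ ≤ 1 := by rw [Padic.eq_padicNorm]; exact_mod_cast hx
  obtain ⟨n, hn0, hnp, hn⟩ := PadicInt.exists_mem_range_of_norm_rat_le_one x hx'
  lift n to ℕ using hn0
  refine ⟨n, by exact_mod_cast hnp, ?_⟩
  have : ‖((x - n : ℚ) : ℚ_[p])‖ < 1 := by
    rw [PadicInt.norm_def] at hn
    push_cast
    exact hn
  rw [Padic.eq_padicNorm] at this
  exact_mod_cast this

end padicNorm

theorem padicNorm_two_lt_one_or_sub_one_lt_one {x : ℚ} (hx : padicNorm 2 x ≤ 1) :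
    padicNorm 2 x < 1 ∨ padicNorm 2 (x - 1) < 1 := by
  obtain ⟨n, hn, hxn⟩ := padicNorm.exists_sub_natCast_lt_one hx
  interval_cases n <;> simp_all

open Finset

variable {V : Type*} [Fintype V]

def cutSize (E : Finset (V × V)) (s : V → Bool) : ℕ :=
  (E.filter (fun e => s e.1 ≠ s e.2)).card

def maxCutLoss (E : Finset (V × V)) (M : ℚ) (β : V → ℚ) : ℚ :=
  M * ∑ j, (padicNorm 2 (β j) + padicNorm 2 (β j - 1)) +
    ∑ e ∈ E, padicNorm 2 (β e.1 + β e.2 - 1)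

/-- The residue of `x` modulo 2, meaningful when `x` is a 2-adic integer. -/
def twoAdicRound (x : ℚ) : Bool :=
  decide (padicNorm 2 (x - 1) < 1)

theorem padicNorm_sub_twoAdicRound_lt_one {x : ℚ} (hx : padicNorm 2 x ≤ 1) :
    padicNorm 2 (x - (twoAdicRound x).toNat) < 1 := by
  by_cases h : padicNorm 2 (x - 1) < 1
  · simp [twoAdicRound, h]
  · simpa [twoAdicRound, h] using (padicNorm_two_lt_one_or_sub_one_lt_one hx).resolve_right h

theorem padicNorm_bool_add_padicNorm_bool_sub_one (b : Bool) :
    padicNorm 2 (b.toNat : ℚ) + padicNorm 2 ((b.toNat : ℚ) - 1) = 1 := by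
  cases b <;> norm_num [padicNorm.neg]

theorem padicNorm_bool_add_bool_sub_one (a b : Bool) :
    padicNorm 2 ((a.toNat : ℚ) + b.toNat - 1) = 1 - if a ≠ b then 1 else 0 := by
  cases a <;> cases b <;> norm_num [padicNorm.neg]

theorem padicNorm_bool_add_bool_sub_one_le {a b : Bool} {x y : ℚ}
    (hx : padicNorm 2 (x - a.toNat) < 1) (hy : padicNorm 2 (y - b.toNat) < 1) :
    padicNorm 2 ((a.toNat : ℚ) + b.toNat - 1) ≤ padicNorm 2 (x + y - 1) := by
  rw [padicNorm_bool_add_bool_sub_one]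
  split_ifs with hab
  · simpa using padicNorm.nonneg _
  have hxy : padicNorm 2 ((x - a.toNat) + (y - b.toNat)) < 1 :=
    lt_of_le_of_lt padicNorm.nonarchimedean (max_lt hx hy)
  have hab1 : padicNorm 2 ((a.toNat : ℚ) + b.toNat - 1) = 1 := by
    rw [padicNorm_bool_add_bool_sub_one, if_neg hab, sub_zero]
  rw [show x + y - 1 = ((a.toNat : ℚ) + b.toNat - 1) + ((x - a.toNat) + (y - b.toNat)) by ring,
    padicNorm.add_eq_of_lt (by rwa [hab1]), hab1, sub_zero]

theorem maxCutLoss_bool (E : Finset (V × V)) (M : ℚ) (s : V → Bool) :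
    maxCutLoss E M (fun j => (s j).toNat) = M * Fintype.card V + E.card - cutSize E s := by
  simp only [maxCutLoss, padicNorm_bool_add_padicNorm_bool_sub_one,
    padicNorm_bool_add_bool_sub_one, sum_sub_distrib, sum_boole, sum_const, card_univ,
    nsmul_eq_mul, mul_one, cutSize]
  ring

theorem maxCutLoss_twoAdicRound_le {E : Finset (V × V)} {M : ℚ} (hM : 0 ≤ M) {β : V → ℚ}
    (hβ : ∀ j, padicNorm 2 (β j) ≤ 1) :
    maxCutLoss E M (fun j => (twoAdicRound (β j)).toNat) ≤ maxCutLoss E M β := by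
  unfold maxCutLoss
  refine add_le_add (mul_le_mul_of_nonneg_left (sum_le_sum fun j _ => ?_) hM)
    (sum_le_sum fun e _ => ?_)
  · rw [padicNorm_bool_add_padicNorm_bool_sub_one]; exact padicNorm.one_le_add_sub_one _
  · exact padicNorm_bool_add_bool_sub_one_le (padicNorm_sub_twoAdicRound_lt_one (hβ _))
      (padicNorm_sub_twoAdicRound_lt_one (hβ _))

theorem card_add_one_le_sum_padicNorm {p : ℕ} [Fact p.Prime] {β : V → ℚ} {j : V}
    (hj : 1 < padicNorm p (β j)) :
    (Fintype.card V + 1 : ℚ) ≤ ∑ i, (padicNorm p (β i) + padicNorm p (β i - 1)) := by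
  classical
  calc (Fintype.card V + 1 : ℚ) = ∑ i, (1 + if i = j then 1 else 0) := by
        simp [sum_add_distrib]
    _ ≤ _ := sum_le_sum fun i _ => by
        split_ifs with hij
        · subst hij
          rw [padicNorm.sub_one_eq_of_one_lt hj]
          linarith
        · simpa using padicNorm.one_le_add_sub_one (β i)

theorem exists_cutSize_le_maxCutLoss (E : Finset (V × V)) {M : ℚ} (hM : M = E.card + 1)
    (β : V → ℚ) : ∃ s, M * Fintype.card V + E.card - cutSize E s ≤ maxCutLoss E M β := by
  have hM0 : 0 ≤ M := by rw [hM]; positivity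
  by_cases hβ : ∀ j, padicNorm 2 (β j) ≤ 1
  · exact ⟨_, (maxCutLoss_bool E M _).symm.le.trans (maxCutLoss_twoAdicRound_le hM0 hβ)⟩
  push Not at hβ
  obtain ⟨j, hj⟩ := hβ
  refine ⟨fun _ => false, ?_⟩
  have hedge : 0 ≤ ∑ e ∈ E, padicNorm 2 (β e.1 + β e.2 - 1) :=
    sum_nonneg fun _ _ => padicNorm.nonneg _
  calc M * Fintype.card V + E.card - cutSize E (fun _ => false)
      ≤ M * (Fintype.card V + 1) := by
        rw [hM]
        linarith [(cutSize E fun _ => false).cast_nonneg (α := ℚ)]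
    _ ≤ maxCutLoss E M β := by
        unfold maxCutLoss
        linarith [mul_le_mul_of_nonneg_left (card_add_one_le_sum_padicNorm hj) hM0]

theorem stmt_19_general (V : Type) [Fintype V] [DecidableEq V]
    (E : Finset (V × V)) (M : ℚ) (hM : M = E.card + 1)
    (L : (V → ℚ) → ℚ)
    (hL : ∀ β, L β =
      M * ∑ j : V, (padicNorm 2 (β j) + padicNorm 2 (β j - 1)) +
        ∑ e ∈ E, padicNorm 2 (β e.1 + β e.2 - 1)) :
    ∃ Lstar : ℚ, IsLeast (Set.range L) Lstar ∧
      (Finset.univ.sup' Finset.univ_nonempty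
          (fun s : V → Bool => ((E.filter (fun e => s e.1 ≠ s e.2)).card : ℚ))) =
        M * (Fintype.card V) + E.card - Lstar := by
  obtain rfl : L = maxCutLoss E M := funext hL
  obtain ⟨s₀, -, hs₀⟩ := exists_mem_eq_sup' univ_nonempty fun s => (cutSize E s : ℚ)
  refine ⟨maxCutLoss E M fun j => (s₀ j).toNat, ⟨⟨_, rfl⟩, ?_⟩, ?_⟩
  · rintro _ ⟨β, rfl⟩
    obtain ⟨s, hs⟩ := exists_cutSize_le_maxCutLoss E hM β
    have hle : (cutSize E s : ℚ) ≤ cutSize E s₀ :=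
      hs₀ ▸ le_sup' (fun s => (cutSize E s : ℚ)) (mem_univ s)
    rw [maxCutLoss_bool]
    linarith
  · change univ.sup' univ_nonempty (fun s => (cutSize E s : ℚ)) = _
    rw [hs₀, maxCutLoss_bool]
    ring

theorem stmt_19 (V : Type) [Fintype V] [DecidableEq V] [Nonempty V]
    (E : Finset (V × V)) (M : ℚ) (hM : M = E.card + 1)
    (L : (V → ℚ) → ℚ)
    (hL : ∀ β, L β =
      M * ∑ j : V, (padicNorm 2 (β j) + padicNorm 2 (β j - 1)) +
        ∑ e ∈ E, padicNorm 2 (β e.1 + β e.2 - 1)) :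
    ∃ Lstar : ℚ, IsLeast (Set.range L) Lstar ∧
      (Finset.univ.sup' Finset.univ_nonempty
          (fun s : V → Bool => ((E.filter (fun e => s e.1 ≠ s e.2)).card : ℚ))) =
        M * (Fintype.card V) + E.card - Lstar :=
  stmt_19_general V E M hM L hL
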